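/- arXiv:2107.06345 — 5 statements merged into one kernel-verified Lean document; each statement's English description precedes it below -/
import Mathlib

section
/- Let L be a symmetric n×n real matrix and V an n×p real matrix of full column rank, p ≤ n. Let Q be an n×(n−p) matrix whose columns form an orthonormal basis of the orthogonal complement of the column span of V (so QᵀV = 0 and QᵀQ = I). Then det([[L, V],[Vᵀ, 0]]) = (−1)^p · det(VᵀV) · det(QᵀLQ). -/
/-!
Put `M = [[L, V], [Vᵀ, 0]]` and `C = [V Q]`. Orthogonality gives `CᵀC = diag(VᵀV, 1)`, so
`det C ^ 2 = det (VᵀV)`, and conjugating `M` by `diag(C, 1)` yields a matrix whose last block row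
and column are `[VᵀV, 0, 0]`. Clearing with them leaves `-VᵀV` and `QᵀLQ` on the block diagonal,
so `det (VᵀV) * det M = (-1) ^ p * det (VᵀV) ^ 2 * det (QᵀLQ)`, and full column rank lets us
cancel `det (VᵀV)`.
-/

open Matrix

namespace Matrix

theorem isUnit_det_of_rank_eq_card {n K : Type*} [Fintype n] [DecidableEq n] [Field K]
    {A : Matrix n n K} (hA : A.rank = Fintype.card n) : IsUnit A.det := by
  rw [← isUnit_iff_isUnit_det, ← mulVec_surjective_iff_isUnit]
  refine LinearMap.range_eq_top.mp
    (Submodule.eq_top_of_finrank_eq (S := LinearMap.range A.mulVecLin) ?_)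
  rw [Module.finrank_fintype_fun_eq_card, ← hA]
  rfl

theorem transpose_submatrix_mul_submatrix {α m n o o' : Type*} [AddCommMonoid α] [Mul α]
    [Fintype m] [Fintype n] (e : n ≃ m) (X : Matrix m o α) (Y : Matrix m o' α) :
    (X.submatrix e id)ᵀ * Y.submatrix e id = Xᵀ * Y := by
  rw [transpose_submatrix, submatrix_mul_equiv, submatrix_id_id]

variable {R : Type*} [CommRing R] {k l m : Type*} [Fintype k] [Fintype l] [Fintype m]
  [DecidableEq k] [DecidableEq l] [DecidableEq m]

theorem det_fromBlocks_mul_mul (X Y A : Matrix m m R) (B : Matrix m k R) (C : Matrix k m R)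
    (D : Matrix k k R) :
    (fromBlocks (X * A * Y) (X * B) (C * Y) D).det = X.det * Y.det * (fromBlocks A B C D).det := by
  have : fromBlocks (X * A * Y) (X * B) (C * Y) D =
      fromBlocks X 0 0 1 * fromBlocks A B C D * fromBlocks Y 0 0 1 := by
    simp [fromBlocks_multiply, Matrix.mul_assoc]
  rw [this, det_mul, det_mul, det_fromBlocks_zero₂₁, det_fromBlocks_zero₂₁]
  simp only [det_one, mul_one]
  ring

theorem det_fromBlocks_fromRows_fromCols (G₁₁ A B : Matrix k k R) (G₁₂ : Matrix k l R)
    (G₂₁ : Matrix l k R) (G₂₂ : Matrix l l R) (hB : IsUnit B.det) :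
    (fromBlocks (fromBlocks G₁₁ G₁₂ G₂₁ G₂₂) (fromRows A (0 : Matrix l k R))
        (fromCols B (0 : Matrix k l R)) 0).det =
      (-1) ^ Fintype.card k * A.det * B.det * G₂₂.det := by
  have := B.invertibleOfIsUnitDet hB
  set G := fromBlocks G₁₁ G₁₂ G₂₁ G₂₂
  -- adding the first block column of `G` to the last block column makes the corner invertible
  have hcol : fromBlocks G (fromRows A 0) (fromCols B 0) 0 *
        fromBlocks 1 (fromRows (1 : Matrix k k R) 0) 0 1 =
      fromBlocks G (fromRows (G₁₁ + A) G₂₁) (fromCols B 0) B := by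
    simp only [G, fromBlocks_multiply, fromBlocks_mul_fromRows, fromCols_mul_fromRows,
      Matrix.mul_one, Matrix.mul_zero, add_zero]
    congr 1
    ext (i | i) j <;> simp
  have hschur : fromRows (G₁₁ + A) G₂₁ * ⅟B * fromCols B (0 : Matrix k l R) =
      fromBlocks (G₁₁ + A) 0 G₂₁ 0 := by
    rw [Matrix.mul_assoc, mul_fromCols, invOf_mul_self, Matrix.mul_zero, fromRows_mul_fromCols]
    simp
  calc (fromBlocks G (fromRows A 0) (fromCols B 0) 0).det
      = (fromBlocks G (fromRows (G₁₁ + A) G₂₁) (fromCols B 0) B).det := by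
        rw [← hcol, det_mul, det_fromBlocks_zero₂₁, det_one, det_one, mul_one, mul_one]
    _ = B.det * (fromBlocks (-A) G₁₂ 0 G₂₂).det := by
        rw [det_fromBlocks₂₂, hschur]
        congr 2
        ext (i | i) (j | j) <;> simp [G]
    _ = (-1) ^ Fintype.card k * A.det * B.det * G₂₂.det := by
        rw [det_fromBlocks_zero₂₁, det_neg]
        ring

theorem det_fromBlocks_transpose_zero_sum (L : Matrix (k ⊕ l) (k ⊕ l) R)
    (V : Matrix (k ⊕ l) k R) (Q : Matrix (k ⊕ l) l R) (hQV : Qᵀ * V = 0) (hQQ : Qᵀ * Q = 1)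
    (hV : IsUnit (Vᵀ * V).det) :
    (fromBlocks L V Vᵀ 0).det = (-1) ^ Fintype.card k * (Vᵀ * V).det * (Qᵀ * L * Q).det := by
  set C := fromCols V Q
  have hVQ : Vᵀ * Q = 0 := by simpa using congr_arg transpose hQV
  have hC : C.det * C.det = (Vᵀ * V).det :=
    calc C.det * C.det = (Cᵀ * C).det := by rw [det_mul, det_transpose]
      _ = (Vᵀ * V).det := by
        rw [transpose_fromCols, fromRows_mul_fromCols, hQV, hVQ, hQQ, det_fromBlocks_zero₂₁,
          det_one, mul_one]
  have hCLC : Cᵀ * L * C =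
      fromBlocks (Vᵀ * L * V) (Vᵀ * L * Q) (Qᵀ * L * V) (Qᵀ * L * Q) := by
    rw [transpose_fromCols, fromRows_mul, fromRows_mul_fromCols]
  have hCV : Cᵀ * V = fromRows (Vᵀ * V) 0 := by rw [transpose_fromCols, fromRows_mul, hQV]
  have hVC : Vᵀ * C = fromCols (Vᵀ * V) 0 := by rw [mul_fromCols, hVQ]
  refine hV.mul_left_cancel ?_
  calc (Vᵀ * V).det * (fromBlocks L V Vᵀ 0).det
      = (fromBlocks (Cᵀ * L * C) (Cᵀ * V) (Vᵀ * C) 0).det := by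
        rw [det_fromBlocks_mul_mul, det_transpose, hC]
    _ = _ := by
        rw [hCLC, hCV, hVC, det_fromBlocks_fromRows_fromCols _ _ _ _ _ _ hV]
        ring

theorem det_fromBlocks_transpose_zero (hm : Fintype.card m = Fintype.card k + Fintype.card l)
    (L : Matrix m m R) (V : Matrix m k R) (Q : Matrix m l R) (hQV : Qᵀ * V = 0)
    (hQQ : Qᵀ * Q = 1) (hV : IsUnit (Vᵀ * V).det) :
    (fromBlocks L V Vᵀ 0).det = (-1) ^ Fintype.card k * (Vᵀ * V).det * (Qᵀ * L * Q).det := by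
  let e : k ⊕ l ≃ m := Fintype.equivOfCardEq (by rw [Fintype.card_sum, hm])
  have key := det_fromBlocks_transpose_zero_sum (L.submatrix e e) (V.submatrix e id)
    (Q.submatrix e id) (by rw [transpose_submatrix_mul_submatrix, hQV])
    (by rw [transpose_submatrix_mul_submatrix, hQQ]) (by rwa [transpose_submatrix_mul_submatrix])
  simp only [transpose_submatrix, submatrix_mul_equiv, submatrix_id_id] at key
  rw [← key, ← det_submatrix_equiv_self (Equiv.sumCongr e (Equiv.refl k))]
  congr 1
  ext (i | i) (j | j) <;> rfl

end Matrix

theorem det_saddlePoint_general {n p : ℕ} (hpn : p ≤ n)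
    (L : Matrix (Fin n) (Fin n) ℝ)
    (V : Matrix (Fin n) (Fin p) ℝ) (hV : V.rank = p)
    (Q : Matrix (Fin n) (Fin (n - p)) ℝ)
    (hQV : Qᵀ * V = 0) (hQQ : Qᵀ * Q = 1) :
    (Matrix.fromBlocks L V Vᵀ (0 : Matrix (Fin p) (Fin p) ℝ)).det =
      (-1 : ℝ) ^ p * (Vᵀ * V).det * (Qᵀ * L * Q).det := by
  have hVV : IsUnit (Vᵀ * V).det :=
    isUnit_det_of_rank_eq_card (by rw [rank_transpose_mul_self, hV, Fintype.card_fin])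
  have hcard : Fintype.card (Fin n) = Fintype.card (Fin p) + Fintype.card (Fin (n - p)) := by
    simp only [Fintype.card_fin]
    omega
  simpa using det_fromBlocks_transpose_zero hcard L V Q hQV hQQ hVV

/-- Determinant of a saddle-point matrix. -/
theorem det_saddlePoint {n p : ℕ} (hpn : p ≤ n)
    (L : Matrix (Fin n) (Fin n) ℝ) (hL : Lᵀ = L)
    (V : Matrix (Fin n) (Fin p) ℝ) (hV : V.rank = p)
    (Q : Matrix (Fin n) (Fin (n - p)) ℝ)
    (hQV : Qᵀ * V = 0) (hQQ : Qᵀ * Q = 1) :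
    (Matrix.fromBlocks L V Vᵀ (0 : Matrix (Fin p) (Fin p) ℝ)).det =
      (-1 : ℝ) ^ p * (Vᵀ * V).det * (Qᵀ * L * Q).det :=
  det_saddlePoint_general hpn L V hV Q hQV hQQ
end

section
/- Let L be an n×n real matrix and V an n×p real matrix. Then the polynomial g(t) = det(L + t·V·Vᵀ) has degree at most p in t, and its coefficient of t^p equals (−1)^p · det([[L, V],[Vᵀ, 0]]). -/
/-!
By the Schur complement with respect to the block `-1`,
`det (L + t V Vᵀ) = (-1)^p det [[L, t V], [Vᵀ, -1]]`. In the latter matrix the first `n`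
columns are constant and the last `p` have degree at most one in `t`, so its determinant has
degree at most `p`, and its `t^p` coefficient is the determinant of the matrix of column-wise
leading coefficients, which is `[[L, V], [Vᵀ, 0]]`.
-/

open Matrix Polynomial

namespace Polynomial

theorem coeff_prod_sum_of_natDegree_le {ι R : Type*} [CommSemiring R] (s : Finset ι)
    (f : ι → R[X]) (d : ι → ℕ) (h : ∀ i ∈ s, (f i).natDegree ≤ d i) :
    (∏ i ∈ s, f i).coeff (∑ i ∈ s, d i) = ∏ i ∈ s, (f i).coeff (d i) := by
  induction s using Finset.cons_induction with
  | empty => simp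
  | cons a s _ ih =>
    have hs : ∀ i ∈ s, (f i).natDegree ≤ d i := fun i hi => h i (Finset.mem_cons_of_mem hi)
    rw [Finset.prod_cons, Finset.sum_cons, Finset.prod_cons,
      coeff_mul_add_eq_of_natDegree_le (h a (Finset.mem_cons_self a s))
        ((natDegree_prod_le _ _).trans (Finset.sum_le_sum hs)), ih hs]

end Polynomial

namespace Matrix

variable {ι R : Type*} [Fintype ι] [DecidableEq ι] [CommRing R]

theorem natDegree_det_le_sum_of_natDegree_le (M : Matrix ι ι R[X]) (d : ι → ℕ)
    (h : ∀ i j, (M i j).natDegree ≤ d j) : M.det.natDegree ≤ ∑ j, d j := by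
  rw [det_apply']
  refine natDegree_sum_le_of_forall_le _ _ fun σ _ => ?_
  refine natDegree_mul_le.trans ?_
  rw [natDegree_intCast, zero_add]
  exact (natDegree_prod_le _ _).trans (Finset.sum_le_sum fun j _ => h (σ j) j)

theorem coeff_det_sum_of_natDegree_le (M : Matrix ι ι R[X]) (d : ι → ℕ)
    (h : ∀ i j, (M i j).natDegree ≤ d j) :
    M.det.coeff (∑ j, d j) = (of fun i j => (M i j).coeff (d j)).det := by
  rw [det_apply', finsetSum_coeff, det_apply']
  refine Finset.sum_congr rfl fun σ _ => ?_
  rw [← map_intCast (C : R →+* R[X]), coeff_C_mul,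
    coeff_prod_sum_of_natDegree_le _ _ _ fun j _ => h (σ j) j]
  rfl

theorem det_fromBlocks_neg_one₂₂ {κ : Type*} [Fintype κ] [DecidableEq κ]
    (A : Matrix ι ι R) (B : Matrix ι κ R) (C : Matrix κ ι R) :
    (fromBlocks A B C (-1)).det = (-1) ^ Fintype.card κ * (A + B * C).det := by
  have : Invertible (1 : Matrix κ κ R) := invertibleOne
  have : Invertible (-1 : Matrix κ κ R) := invertibleNeg 1
  rw [det_fromBlocks₂₂, invOf_neg, invOf_one, det_neg, det_one, mul_one, Matrix.mul_neg,
    Matrix.mul_one, Matrix.neg_mul, sub_neg_eq_add]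

end Matrix

/-- The polynomial `t ↦ det (L + t V Vᵀ)` has degree at most `p`, and its `t^p`
coefficient is `(-1)^p` times the determinant of the saddle-point matrix. -/
theorem det_add_smul_coeff {n p : ℕ}
    (L : Matrix (Fin n) (Fin n) ℝ) (V : Matrix (Fin n) (Fin p) ℝ) :
    ((L.map Polynomial.C + (Polynomial.X : Polynomial ℝ) • (V * Vᵀ).map Polynomial.C).det).natDegree ≤ p ∧
    ((L.map Polynomial.C + (Polynomial.X : Polynomial ℝ) • (V * Vᵀ).map Polynomial.C).det).coeff p =
      (-1 : ℝ) ^ p * (Matrix.fromBlocks L V Vᵀ (0 : Matrix (Fin p) (Fin p) ℝ)).det := by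
  let M : Matrix (Fin n ⊕ Fin p) (Fin n ⊕ Fin p) ℝ[X] :=
    fromBlocks (L.map C) ((X : ℝ[X]) • V.map C) (Vᵀ.map C) (-1)
  let d : Fin n ⊕ Fin p → ℕ := Sum.elim 0 1
  have hsum : ∑ j, d j = p := by simp [d, Fintype.sum_sum_type]
  have hdeg : ∀ i j, (M i j).natDegree ≤ d j := by
    rintro (i | i) (j | j)
    · simp [M, d]
    · simpa [M, d] using (natDegree_C_mul_le (V i j) X).trans natDegree_X_le
    · simp [M, d]
    · by_cases hij : i = j <;> simp [M, d, one_apply, hij]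
  have hlead : (of fun i j => (M i j).coeff (d j)) = fromBlocks L V Vᵀ 0 := by
    ext (i | i) (j | j)
    · simp [M, d]
    · simp [M, d]
    · simp [M, d]
    · by_cases hij : i = j <;> simp [M, d, one_apply, hij, coeff_one]
  have hM : (L.map C + (X : ℝ[X]) • (V * Vᵀ).map C).det = C ((-1) ^ p) * M.det := by
    rw [det_fromBlocks_neg_one₂₂, Fintype.card_fin, ← mul_assoc, map_pow, map_neg, map_one,
      ← mul_pow, neg_one_mul, neg_neg, one_pow, one_mul, Matrix.smul_mul, Matrix.map_mul,
      transpose_map]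
  rw [hM, coeff_C_mul, ← hlead, ← coeff_det_sum_of_natDegree_le M d hdeg, hsum]
  exact ⟨(natDegree_C_mul_le _ _).trans ((natDegree_det_le_sum_of_natDegree_le M d hdeg).trans
    hsum.le), rfl⟩
end

section
/- Let (L, V) be a pair with L ∈ ℝ^{n×n} symmetric and conditionally positive semi-definite with respect to V ∈ ℝ^{n×p} of full column rank. Let Q have orthonormal columns spanning span(V), and L̃ = (I−QQᵀ)L(I−QQᵀ). Then for every subset X ⊆ {1,...,n}: (−1)^p · det([[L_X, V_{X,:}],[(V_{X,:})ᵀ, 0]]) = (−1)^p · det([[L̃_X, V_{X,:}],[(V_{X,:})ᵀ, 0]]) and this common value is ≥ 0. -/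
/-!
Since `V = QR` with `R` invertible, `QQᵀ = VS` for `S = R⁻¹Qᵀ`, so `L̃ = L + VC + BVᵀ` for some
`C, B`; these terms are cleared from the saddle-point matrix by block-triangular row and column
operations of determinant one. Since `Vᵀ(I - QQᵀ) = 0`, conditional positive semidefiniteness makes
`L̃` positive semidefinite. For positive definite `A` the Schur complement gives
`(-1)^p det [[A, N], [Nᵀ, 0]] = det A · det (Nᵀ A⁻¹ N) ≥ 0`, and the semidefinite case follows by
continuity from `A + εI`.
-/

open Matrix

/-- The saddle-point matrix `[[L_X, V_X],[V_Xᵀ, 0]]` restricted to rows/columns in `X`. -/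
def saddleSub {n p : ℕ} (L : Matrix (Fin n) (Fin n) ℝ) (V : Matrix (Fin n) (Fin p) ℝ)
    (X : Finset (Fin n)) : Matrix (↥X ⊕ Fin p) (↥X ⊕ Fin p) ℝ :=
  Matrix.fromBlocks (L.submatrix (fun i => i.1) (fun i => i.1))
    (V.submatrix (fun i => i.1) id) (V.submatrix (fun i => i.1) id)ᵀ 0

section Saddle

variable {m k R : Type*} [Fintype m] [Fintype k] [DecidableEq m] [DecidableEq k]

theorem det_fromBlocks_add_mul_add_mul [CommRing R] (A : Matrix m m R) (N : Matrix m k R)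
    (M : Matrix k m R) (C : Matrix k m R) (B : Matrix m k R) :
    (fromBlocks (A + N * C + B * M) N M 0).det = (fromBlocks A N M 0).det := by
  have h : fromBlocks (A + N * C + B * M) N M 0 =
      fromBlocks 1 B 0 1 * fromBlocks A N M 0 * fromBlocks 1 0 C 1 := by
    simp only [fromBlocks_multiply]
    congr 1 <;> simp only [Matrix.one_mul, Matrix.mul_one, Matrix.zero_mul, Matrix.mul_zero,
      add_zero, zero_add]
    abel
  rw [h, det_mul, det_mul, det_fromBlocks_zero₂₁, det_fromBlocks_zero₁₂]
  simp

theorem saddle_det_nonneg_of_posDef {A : Matrix m m ℝ} (hA : A.PosDef) (N : Matrix m k ℝ) :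
    0 ≤ (-1) ^ Fintype.card k * (fromBlocks A N Nᵀ 0).det := by
  have : Invertible A := hA.isUnit.invertible
  have hS : (Nᵀ * A⁻¹ * N).PosSemidef := by
    simpa only [conjTranspose_eq_transpose_of_trivial] using
      hA.inv.posSemidef.conjTranspose_mul_mul_same N
  have hsq : ((-1 : ℝ) ^ Fintype.card k) * (-1) ^ Fintype.card k = 1 := by
    rw [← mul_pow]; simp
  rw [det_fromBlocks₁₁, invOf_eq_nonsing_inv, zero_sub, det_neg, mul_left_comm,
    ← mul_assoc ((-1) ^ _), hsq, one_mul]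
  exact mul_nonneg hA.det_pos.le hS.det_nonneg

theorem saddle_det_nonneg_of_posSemidef {A : Matrix m m ℝ} (hA : A.PosSemidef)
    (N : Matrix m k ℝ) : 0 ≤ (-1) ^ Fintype.card k * (fromBlocks A N Nᵀ 0).det := by
  let f : ℝ → ℝ := fun ε => (-1) ^ Fintype.card k * (fromBlocks (A + ε • 1) N Nᵀ 0).det
  have hf : Continuous f := by fun_prop
  have hpos : Set.Ioi 0 ⊆ {ε | 0 ≤ f ε} := fun ε hε =>
    saddle_det_nonneg_of_posDef (PosDef.posSemidef_add hA (PosDef.one.smul hε)) N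
  have h0 : (0 : ℝ) ∈ {ε | 0 ≤ f ε} :=
    (isClosed_le continuous_const hf).closure_subset_iff.mpr hpos (by simp)
  simpa [f] using h0

end Saddle

theorem one_sub_mul_mul_one_sub_eq {n k R : Type*} [Fintype n] [Fintype k] [DecidableEq n]
    [Ring R] (L : Matrix n n R) (V : Matrix n k R) (S W : Matrix k n R) (T : Matrix n k R) :
    (1 - V * S) * L * (1 - T * W) = L + V * -(S * L) + ((V * S - 1) * L * T) * W := by
  simp only [sub_mul, mul_sub, Matrix.mul_neg, Matrix.one_mul, Matrix.mul_one, Matrix.mul_assoc]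
  abel

theorem isUnit_of_rank_mul_eq_card {l k K : Type*} [Fintype k] [DecidableEq k] [Field K]
    (A : Matrix l k K) (B : Matrix k k K) (h : (A * B).rank = Fintype.card k) : IsUnit B := by
  have hB : B.rank = Fintype.card k :=
    le_antisymm B.rank_le_card_width (h ▸ rank_mul_le_right A B)
  rw [← mulVec_surjective_iff_isUnit, ← coe_mulVecLin, ← LinearMap.range_eq_top]
  exact Submodule.eq_top_of_finrank_eq (by rwa [Module.finrank_fintype_fun_eq_card])

theorem posSemidef_transpose_mul_mul_of_mul_eq_zero {n m p : Type*} [Fintype n] [Fintype m]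
    [Fintype p] {L : Matrix n n ℝ} (hL : Lᵀ = L) {V : Matrix n p ℝ}
    (hCPSD : ∀ x, Vᵀ *ᵥ x = 0 → 0 ≤ x ⬝ᵥ L *ᵥ x) {P : Matrix n m ℝ} (hVP : Vᵀ * P = 0) :
    (Pᵀ * L * P).PosSemidef := by
  refine .of_dotProduct_mulVec_nonneg ?_ fun x => ?_
  · simp [IsHermitian, conjTranspose_eq_transpose_of_trivial, transpose_mul, hL, Matrix.mul_assoc]
  · have := hCPSD (P *ᵥ x) (by rw [mulVec_mulVec, hVP, zero_mulVec])
    simpa [← mulVec_mulVec, dotProduct_mulVec, vecMul_transpose] using this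

theorem det_saddleSub_add_mul_add_mul {n p : ℕ} (L : Matrix (Fin n) (Fin n) ℝ)
    (V : Matrix (Fin n) (Fin p) ℝ) (C : Matrix (Fin p) (Fin n) ℝ) (B : Matrix (Fin n) (Fin p) ℝ)
    (X : Finset (Fin n)) :
    (saddleSub (L + V * C + B * Vᵀ) V X).det = (saddleSub L V X).det := by
  have hsub : (L + V * C + B * Vᵀ).submatrix (↑) (↑) = L.submatrix (↑) (↑) +
      V.submatrix (fun i : X => i.1) id * C.submatrix id (↑) +
      B.submatrix (↑) id * (V.submatrix (fun i : X => i.1) id)ᵀ := by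
    rw [transpose_submatrix, ← submatrix_mul _ _ _ id _ Function.bijective_id,
      ← submatrix_mul _ _ _ id _ Function.bijective_id]
    rfl
  rw [saddleSub, hsub]
  exact det_fromBlocks_add_mul_add_mul ..

/-- For a nonnegative pair `(L, V)`, the saddle-point determinants of `L` and of the
projected matrix `L̃` coincide on every subset `X`, and are nonnegative up to `(-1)^p`. -/
theorem saddle_det_eq_and_nonneg {n p : ℕ}
    (L : Matrix (Fin n) (Fin n) ℝ) (hL : Lᵀ = L)
    (V : Matrix (Fin n) (Fin p) ℝ) (hV : V.rank = p)
    (hCPSD : ∀ x : Fin n → ℝ, Vᵀ.mulVec x = 0 → 0 ≤ x ⬝ᵥ L.mulVec x)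
    (Q : Matrix (Fin n) (Fin p) ℝ) (hQQ : Qᵀ * Q = 1)
    (hspan : ∃ R : Matrix (Fin p) (Fin p) ℝ, V = Q * R)
    (X : Finset (Fin n)) :
    (-1 : ℝ) ^ p * (saddleSub L V X).det =
      (-1 : ℝ) ^ p * (saddleSub ((1 - Q * Qᵀ) * L * (1 - Q * Qᵀ)) V X).det ∧
    0 ≤ (-1 : ℝ) ^ p * (saddleSub L V X).det := by
  obtain ⟨R, hVR⟩ := hspan
  have hR : IsUnit R.det :=
    (isUnit_iff_isUnit_det R).mp (isUnit_of_rank_mul_eq_card Q R (by simp [← hVR, hV]))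
  have hVS : V * (R⁻¹ * Qᵀ) = Q * Qᵀ := by
    rw [hVR, Matrix.mul_assoc, ← Matrix.mul_assoc R, mul_nonsing_inv _ hR, Matrix.one_mul]
  have hSV : (R⁻¹ * Qᵀ)ᵀ * Vᵀ = Q * Qᵀ := by
    rw [← transpose_mul, hVS, transpose_mul, transpose_transpose]
  have hVP : Vᵀ * (1 - Q * Qᵀ) = 0 := by
    rw [hVR, transpose_mul, Matrix.mul_sub, Matrix.mul_one, Matrix.mul_assoc,
      ← Matrix.mul_assoc Qᵀ, hQQ, Matrix.one_mul, sub_self]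
  have hP : (1 - Q * Qᵀ)ᵀ = 1 - Q * Qᵀ := by simp [transpose_sub]
  have hdet : (saddleSub ((1 - Q * Qᵀ) * L * (1 - Q * Qᵀ)) V X).det = (saddleSub L V X).det := by
    have hsandwich : (1 - Q * Qᵀ) * L * (1 - Q * Qᵀ) =
        (1 - V * (R⁻¹ * Qᵀ)) * L * (1 - (R⁻¹ * Qᵀ)ᵀ * Vᵀ) := by
      rw [hVS, hSV]
    rw [hsandwich, one_sub_mul_mul_one_sub_eq, det_saddleSub_add_mul_add_mul]
  have hnn := saddle_det_nonneg_of_posSemidef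
    ((posSemidef_transpose_mul_mul_of_mul_eq_zero hL hCPSD hVP).submatrix (fun i : X => i.1))
    (V.submatrix (fun i : X => i.1) id)
  rw [hP, Fintype.card_fin] at hnn
  exact ⟨by rw [hdet], by rw [← hdet]; exact hnn⟩
end

section
/- (Generalized Cauchy–Binet for saddle-point matrices.) Let (L,V) be a nonnegative pair: L ∈ ℝ^{n×n} symmetric, conditionally positive semi-definite with respect to V ∈ ℝ^{n×p} of full column rank. Let Q ∈ ℝ^{n×p} be an orthonormal basis of span(V), L̃ = (I−QQᵀ)L(I−QQᵀ) with truncated eigendecomposition L̃ = Ũ·Λ̃·Ũᵀ (Λ̃ = diag(λ̃_1,...,λ̃_q) the nonzero eigenvalues, Ũ the corresponding orthonormal eigenvectors, q = rank L̃). Then for any X ⊆ {1,...,n} with |X| = m, p ≤ m ≤ p+q: (−1)^p·det([[L_X, V_{X,:}],[(V_{X,:})ᵀ, 0]]) = det(VᵀV) · Σ_{Y⊆{1,...,q}, |Y|=m−p} det([Q_{X,:} Ũ_{X,Y}])² · ∏_{i∈Y} λ̃_i. -/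
open Matrix

/-- The matrix `[Q_{X,:}  Ũ_{X,Y}]`: rows indexed by `X`, columns by `Fin p ⊕ ↥Y`. -/
def concatSub {n p q : ℕ} (Q : Matrix (Fin n) (Fin p) ℝ) (U : Matrix (Fin n) (Fin q) ℝ)
    (X : Finset (Fin n)) (Y : Finset (Fin q)) : Matrix (↥X) (Fin p ⊕ ↥Y) ℝ :=
  fun i => Sum.elim (fun a => Q i.1 a) (fun b => U i.1 b.1)

/-!
Writing `V = Q R` gives `det (Vᵀ V) = det R ^ 2` and pulls `det R ^ 2` out of the saddle-point
determinant, leaving the border `Q_X`. Since `L̃ = L + Q M + N Qᵀ` for suitable `M, N`, block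
elimination against the border replaces `L_X` by `L̃_X = Ũ_X Λ̃ Ũ_Xᵀ`.

A bordered matrix `[[U D Uᵀ, B], [Bᵀ, 0]]` factors as
`[[B, U, 0], [0, 0, I]] * [[0, I], [D Uᵀ, 0], [Bᵀ, 0]]`, so the Cauchy–Binet formula expands its
determinant over the column sets `S` of the first factor. Only the sets containing both border
copies of the index set of `B` contribute; they are `P ⊕ Y ⊕ P` with `Y` a set of columns of `U`,
and the term for `Y` is the bordered determinant of the square matrix `[B, U_Y]`. That one is
`(-1) ^ p det [B, U_Y] ^ 2 ∏_{k ∈ Y} d_k`, by the congruence `C W Cᵀ` with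
`C = [[B, U_Y, 0], [0, 0, I]]` and `W` a signed permutation of `diag (1, D, 1)`.
-/

open Finset Function

namespace Matrix

variable {R : Type*} [CommRing R]

section CauchyBinet

theorem submatrix_val_mul_submatrix_val_apply {l m n : Type*} (F : Matrix l n R)
    (G : Matrix n m R) (S : Finset n) (i : l) (j : m) :
    ((F.submatrix id Subtype.val : Matrix l S R) * (G.submatrix Subtype.val id : Matrix S m R))
      i j = ∑ s ∈ S, F i s * G s j :=
  sum_coe_sort S fun s => F i s * G s j

variable {m n : Type*} [Fintype m] [DecidableEq m]

theorem det_submatrix_val_mul_eq_zero_of_row (F : Matrix m n R) (G : Matrix n m R)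
    {S : Finset n} (i : m) (h : ∀ s ∈ S, F i s = 0) :
    det ((F.submatrix id Subtype.val : Matrix m S R) *
      (G.submatrix Subtype.val id : Matrix S m R)) = 0 :=
  det_eq_zero_of_row_eq_zero i fun j => by
    rw [submatrix_val_mul_submatrix_val_apply]
    exact sum_eq_zero fun s hs => by rw [h s hs, zero_mul]

theorem det_submatrix_val_mul_eq_zero_of_col (F : Matrix m n R) (G : Matrix n m R)
    {S : Finset n} (j : m) (h : ∀ s ∈ S, G s j = 0) :
    det ((F.submatrix id Subtype.val : Matrix m S R) *
      (G.submatrix Subtype.val id : Matrix S m R)) = 0 :=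
  det_eq_zero_of_column_eq_zero j fun i => by
    rw [submatrix_val_mul_submatrix_val_apply]
    exact sum_eq_zero fun s hs => by rw [h s hs, mul_zero]

variable [Fintype n]

theorem det_mul_eq_sum_prod_mul_det_submatrix (F : Matrix m n R) (G : Matrix n m R) :
    det (F * G) = ∑ r : m → n, (∏ i, F i (r i)) * det (G.submatrix r id) := by
  have hrows : F * G = fun i => ∑ k, F i k • G k := by
    ext i j
    simp [mul_apply]
  rw [hrows]
  exact (detRowAlternating.toMultilinearMap.map_sum _).trans
    (sum_congr rfl fun r _ => detRowAlternating.toMultilinearMap.map_smul_univ _ _)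

/-- The Cauchy–Binet formula. -/
theorem det_mul_eq_sum_det_submatrix_mul [DecidableEq n] (F : Matrix m n R) (G : Matrix n m R) :
    det (F * G) = ∑ S ∈ powersetCard (Fintype.card m) univ,
      det ((F.submatrix id Subtype.val : Matrix m S R) *
        (G.submatrix Subtype.val id : Matrix S m R)) := by
  set f : (m → n) → R := fun r => (∏ i, F i (r i)) * det (G.submatrix r id)
  have hf : ∀ r, ¬ Injective r → f r = 0 := by
    intro r hr
    obtain ⟨i, j, hij, hne⟩ : ∃ i j, r i = r j ∧ i ≠ j := by
      simpa [Injective, and_comm] using hr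
    simp only [f]
    rw [det_zero_of_row_eq (M := G.submatrix r id) hne (congrArg G hij), mul_zero]
  have hminor : ∀ S : Finset n, det ((F.submatrix id Subtype.val : Matrix m S R) *
      (G.submatrix Subtype.val id : Matrix S m R)) = ∑ r with ∀ i, r i ∈ S, f r := by
    intro S
    rw [det_mul_eq_sum_prod_mul_det_submatrix, sum_subtype _ fun r => mem_filter_univ r]
    exact Fintype.sum_equiv Equiv.subtypePiEquivPi.symm _ _ fun r => rfl
  have himage : ∀ r ∈ ({r | Injective r} : Finset (m → n)),
      univ.image r ∈ powersetCard (Fintype.card m) univ := by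
    intro r hr
    simp_all [card_image_of_injective]
  calc det (F * G) = ∑ r, f r := det_mul_eq_sum_prod_mul_det_submatrix F G
    _ = ∑ r with Injective r, f r :=
      (sum_filter_of_ne fun r _ h => not_not.1 (mt (hf r) h)).symm
    _ = ∑ S ∈ powersetCard (Fintype.card m) univ,
          ∑ r with Injective r ∧ univ.image r = S, f r := by
      rw [← sum_fiberwise_of_maps_to himage, sum_congr rfl fun S _ => by rw [filter_filter]]
    _ = _ := by
      refine sum_congr rfl fun S hS => hminor S ▸ sum_subset ?_ ?_
      · intro r hr
        rw [mem_filter_univ] at hr ⊢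
        exact fun i => hr.2 ▸ mem_image_of_mem r (mem_univ i)
      · -- an injective map into `S` has image `S`, so the extra terms are not injective
        intro r hr hr'
        refine hf r fun hinj => hr' ((mem_filter_univ r).2 ⟨hinj, ?_⟩)
        refine eq_of_subset_of_card_le (fun _ hk => ?_) ?_
        · obtain ⟨i, -, rfl⟩ := mem_image.1 hk
          exact (mem_filter_univ r).1 hr i
        · rw [(mem_powersetCard.1 hS).2, card_image_of_injective _ hinj, card_univ]

end CauchyBinet

section Bordered

variable {m n : Type*} [Fintype m] [Fintype n] [DecidableEq m] [DecidableEq n]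

theorem det_fromBlocks_zero_one_one_zero :
    det (fromBlocks 0 1 1 0 : Matrix (m ⊕ m) (m ⊕ m) R) = (-1) ^ Fintype.card m := by
  have h : (fromBlocks 0 1 1 0 : Matrix (m ⊕ m) (m ⊕ m) R) * fromBlocks 1 0 1 1 =
      fromBlocks 1 1 1 0 := by
    simp [fromBlocks_multiply]
  have := congrArg det h
  rw [det_mul, det_fromBlocks_zero₁₂, det_fromBlocks_one₁₁] at this
  simpa [det_neg] using this

theorem det_mul_mul_transpose_of_card_eq (A : Matrix m n R) (B : Matrix n n R)
    (h : Fintype.card m = Fintype.card n) :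
    det (A * B * Aᵀ) = det (A * Aᵀ) * det B := by
  let e : m ≃ n := Fintype.equivOfCardEq h
  have hsq : ∀ B : Matrix n n R,
      A * B * Aᵀ = A.submatrix id e * B.submatrix e e * (A.submatrix id e)ᵀ := by
    intro B
    simp only [transpose_submatrix, submatrix_mul_equiv, submatrix_id_id]
  rw [hsq B, show A * Aᵀ = A * (1 : Matrix n n R) * Aᵀ by rw [Matrix.mul_one], hsq 1]
  simp only [det_mul, det_transpose, det_submatrix_equiv_self, submatrix_one_equiv, det_one]
  ring

theorem det_fromBlocks_add_mul_add_mul_zero (A : Matrix m m R) (B : Matrix m n R)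
    (C : Matrix n m R) (M : Matrix n m R) (N : Matrix m n R) :
    det (fromBlocks (A + B * M + N * C) B C 0) = det (fromBlocks A B C 0) := by
  have h : fromBlocks 1 N 0 1 * fromBlocks A B C 0 * fromBlocks 1 0 M 1 =
      fromBlocks (A + B * M + N * C) B C 0 := by
    simp only [fromBlocks_multiply, Matrix.one_mul, Matrix.mul_one, Matrix.zero_mul,
      Matrix.mul_zero, add_zero, zero_add, fromBlocks_inj, and_true]
    abel
  rw [← h, det_mul, det_mul, det_fromBlocks_zero₂₁, det_fromBlocks_zero₁₂]
  simp only [det_one, one_mul, mul_one]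

theorem det_fromBlocks_submatrix_one_sub_mul_mul_one_sub {N : Type*} [Fintype N]
    [DecidableEq N] (L : Matrix N N R) (Q : Matrix N n R) (r : m → N) :
    det (fromBlocks (((1 - Q * Qᵀ) * L * (1 - Q * Qᵀ)).submatrix r r) (Q.submatrix r id)
      (Q.submatrix r id)ᵀ 0) =
      det (fromBlocks (L.submatrix r r) (Q.submatrix r id) (Q.submatrix r id)ᵀ 0) := by
  have hproj : (1 - Q * Qᵀ) * L * (1 - Q * Qᵀ) =
      L + Q * (Qᵀ * L * Q * Qᵀ - Qᵀ * L) + -(L * Q) * Qᵀ := by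
    simp only [Matrix.sub_mul, Matrix.mul_sub, Matrix.neg_mul, Matrix.mul_one, Matrix.one_mul,
      Matrix.mul_assoc]
    abel
  rw [hproj, ← det_fromBlocks_add_mul_add_mul_zero (L.submatrix r r) _ _
    ((Qᵀ * L * Q * Qᵀ - Qᵀ * L).submatrix id r) ((-(L * Q)).submatrix r id)]
  rfl

theorem det_fromBlocks_mul_transpose_zero (A : Matrix m m R) (B : Matrix m n R)
    (T : Matrix n n R) :
    det (fromBlocks A (B * T) (B * T)ᵀ 0) = det T ^ 2 * det (fromBlocks A B Bᵀ 0) := by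
  have h : fromBlocks 1 0 0 Tᵀ * fromBlocks A B Bᵀ 0 * fromBlocks 1 0 0 T =
      fromBlocks A (B * T) (B * T)ᵀ 0 := by
    simp [fromBlocks_multiply, transpose_mul]
  rw [← h, det_mul, det_mul, det_fromBlocks_zero₂₁, det_fromBlocks_zero₂₁, det_transpose]
  simp only [det_one]
  ring

end Bordered

section SaddlePoint

variable {ι P κ : Type*}

def borderedLeft [DecidableEq P] (B : Matrix ι P R) (U : Matrix ι κ R) :
    Matrix (ι ⊕ P) ((P ⊕ κ) ⊕ P) R :=
  fromBlocks (fromCols B U) 0 0 1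

def borderedRight [Fintype κ] [DecidableEq P] [DecidableEq κ] (B : Matrix ι P R)
    (U : Matrix ι κ R) (d : κ → R) : Matrix ((P ⊕ κ) ⊕ P) (ι ⊕ P) R :=
  fromBlocks (fromRows 0 (diagonal d * Uᵀ)) (fromRows 1 0) Bᵀ 0

variable [Fintype P] [Fintype κ] [DecidableEq P] [DecidableEq κ]

theorem borderedLeft_mul_borderedRight (B : Matrix ι P R) (U : Matrix ι κ R) (d : κ → R) :
    borderedLeft B U * borderedRight B U d = fromBlocks (U * diagonal d * Uᵀ) B Bᵀ 0 := by
  simp [borderedLeft, borderedRight, fromBlocks_multiply, fromCols_mul_fromRows,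
    Matrix.mul_assoc]

theorem borderedLeft_submatrix_mul_borderedRight_submatrix (B : Matrix ι P R)
    (U : Matrix ι κ R) (d : κ → R) (Y : Finset κ) :
    ((borderedLeft B U).submatrix id Subtype.val :
        Matrix _ ((univ.disjSum Y).disjSum univ : Finset _) R) *
      ((borderedRight B U d).submatrix Subtype.val id :
        Matrix ((univ.disjSum Y).disjSum univ : Finset _) _ R) =
      fromBlocks ((U.submatrix id Subtype.val : Matrix ι Y R) * diagonal (fun k : Y => d k) *
        (U.submatrix id Subtype.val : Matrix ι Y R)ᵀ) B Bᵀ 0 := by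
  ext i j
  rw [submatrix_val_mul_submatrix_val_apply]
  rcases i with i | i <;> rcases j with j | j
  · simpa [sum_disjSum, borderedLeft, borderedRight, mul_apply, diagonal_apply, mul_assoc] using
      (sum_attach Y fun k => U i k * (d k * U j k)).symm
  all_goals simp [sum_disjSum, borderedLeft, borderedRight, one_apply]

variable [Fintype ι] [DecidableEq ι]

/-- If `T` misses a column of the identity block of `borderedLeft B U`, the first minor has a
zero row; if it misses a row of the identity block of `borderedRight B U d`, the second minor
has a zero column. -/
theorem det_borderedLeft_submatrix_mul_borderedRight_submatrix_eq_zero (B : Matrix ι P R)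
    (U : Matrix ι κ R) (d : κ → R) {T : Finset ((P ⊕ κ) ⊕ P)}
    (hT : (∃ a, Sum.inr a ∉ T) ∨ ∃ a, Sum.inl (Sum.inl a) ∉ T) :
    det (((borderedLeft B U).submatrix id Subtype.val : Matrix _ T R) *
      ((borderedRight B U d).submatrix Subtype.val id : Matrix T _ R)) = 0 := by
  rcases hT with ⟨a, ha⟩ | ⟨a, ha⟩
  · refine det_submatrix_val_mul_eq_zero_of_row _ _ (Sum.inr a) fun s hs => ?_
    rcases s with _ | b
    · rfl
    · exact one_apply_ne fun hab => ha (hab ▸ hs)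
  · refine det_submatrix_val_mul_eq_zero_of_col _ _ (Sum.inr a) fun s hs => ?_
    rcases s with (b | k) | b
    · exact one_apply_ne fun hba => ha (hba ▸ hs)
    · rfl
    · rfl

theorem det_fromBlocks_fromBlocks_diagonal_fromRows_fromCols (d : κ → R) :
    det (fromBlocks (fromBlocks 0 0 0 (diagonal d)) (fromRows 1 0) (fromCols 1 0) 0 :
      Matrix ((P ⊕ κ) ⊕ P) ((P ⊕ κ) ⊕ P) R) = (-1) ^ Fintype.card P * ∏ k, d k := by
  let e : κ ⊕ (P ⊕ P) ≃ (P ⊕ κ) ⊕ P :=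
    (Equiv.sumAssoc κ P P).symm.trans (Equiv.sumCongr (Equiv.sumComm κ P) (Equiv.refl P))
  have h : (fromBlocks (fromBlocks 0 0 0 (diagonal d)) (fromRows 1 0) (fromCols 1 0) 0 :
      Matrix ((P ⊕ κ) ⊕ P) ((P ⊕ κ) ⊕ P) R).submatrix e e =
      fromBlocks (diagonal d) 0 0 (fromBlocks 0 1 1 0) := by
    ext (i | i | i) (j | j | j) <;> simp [e, one_apply, diagonal_apply]
  rw [← det_submatrix_equiv_self e, h, det_fromBlocks_zero₂₁, det_diagonal,
    det_fromBlocks_zero_one_one_zero, mul_comm]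

theorem det_fromBlocks_mul_diagonal_mul_transpose_of_card_eq (B : Matrix ι P R)
    (U : Matrix ι κ R) (d : κ → R) (h : Fintype.card ι = Fintype.card P + Fintype.card κ) :
    (-1) ^ Fintype.card P * det (fromBlocks (U * diagonal d * Uᵀ) B Bᵀ 0) =
      det (fromCols B U * (fromCols B U)ᵀ) * ∏ k, d k := by
  have hfac : fromBlocks (U * diagonal d * Uᵀ) B Bᵀ 0 = borderedLeft B U *
      (fromBlocks (fromBlocks 0 0 0 (diagonal d)) (fromRows 1 0) (fromCols 1 0) 0 :
        Matrix ((P ⊕ κ) ⊕ P) ((P ⊕ κ) ⊕ P) R) * (borderedLeft B U)ᵀ := by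
    simp [borderedLeft, fromBlocks_transpose, fromBlocks_multiply, fromCols_mul_fromBlocks,
      fromCols_mul_fromRows, transpose_fromCols, Matrix.mul_assoc]
  have hC : borderedLeft B U * (borderedLeft B U)ᵀ =
      fromBlocks (fromCols B U * (fromCols B U)ᵀ) 0 0 1 := by
    simp [borderedLeft, fromBlocks_transpose, fromBlocks_multiply]
  have hsign : (-1 : R) ^ Fintype.card P * (-1) ^ Fintype.card P = 1 := by
    rw [← pow_add, ← two_mul, pow_mul, neg_one_sq, one_pow]
  rw [hfac, det_mul_mul_transpose_of_card_eq _ _ (by simp [h]), hC,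
    det_fromBlocks_fromBlocks_diagonal_fromRows_fromCols, det_fromBlocks_zero₂₁, det_one,
    mul_one]
  linear_combination (det (fromCols B U * (fromCols B U)ᵀ) * ∏ k, d k) * hsign

theorem det_fromBlocks_mul_diagonal_mul_transpose (B : Matrix ι P R) (U : Matrix ι κ R)
    (d : κ → R) :
    (-1) ^ Fintype.card P * det (fromBlocks (U * diagonal d * Uᵀ) B Bᵀ 0) =
      ∑ Y : Finset κ with Fintype.card P + #Y = Fintype.card ι,
        det (fromCols B (U.submatrix id Subtype.val : Matrix ι Y R) *
          (fromCols B (U.submatrix id Subtype.val : Matrix ι Y R))ᵀ) * ∏ k ∈ Y, d k := by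
  rw [← borderedLeft_mul_borderedRight B U d, det_mul_eq_sum_det_submatrix_mul, mul_sum]
  refine (sum_of_injOn (fun Y => (univ.disjSum Y).disjSum univ) ?_ ?_ ?_ ?_).symm
  · intro Y _ Y' _ h
    simpa using h
  · intro Y hY
    rw [mem_coe, mem_filter_univ] at hY
    simp [card_disjSum, ← hY]
  · intro T hT hT'
    rw [det_borderedLeft_submatrix_mul_borderedRight_submatrix_eq_zero B U d ?_, mul_zero]
    by_contra! hmem
    have hT_eq : (univ.disjSum T.toLeft.toRight).disjSum univ = T := by
      ext ((a | k) | a) <;> simp [hmem.1, hmem.2]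
    have hcard := (mem_powersetCard.1 hT).2
    rw [← hT_eq] at hcard
    simp only [card_disjSum, card_univ, Fintype.card_sum] at hcard
    exact hT' ⟨T.toLeft.toRight, by rw [mem_coe, mem_filter_univ]; omega, hT_eq⟩
  · intro Y hY
    rw [mem_filter_univ] at hY
    rw [borderedLeft_submatrix_mul_borderedRight_submatrix,
      det_fromBlocks_mul_diagonal_mul_transpose_of_card_eq _ _ _ (by simp [hY]), prod_coe_sort]

end SaddlePoint

end Matrix

/-- With `C = concatSub Q U X Y`, `det (C * Cᵀ)` stands for `det [Q_{X,:} Ũ_{X,Y}] ^ 2`; `C` is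
square since `|X| = p + (m - p)`. -/
theorem generalized_cauchy_binet_general {n p q : ℕ}
    (L : Matrix (Fin n) (Fin n) ℝ)
    (V : Matrix (Fin n) (Fin p) ℝ)
    (Q : Matrix (Fin n) (Fin p) ℝ) (hQQ : Qᵀ * Q = 1)
    (hspan : ∃ R : Matrix (Fin p) (Fin p) ℝ, V = Q * R)
    (U : Matrix (Fin n) (Fin q) ℝ)
    (lam : Fin q → ℝ)
    (hdecomp : (1 - Q * Qᵀ) * L * (1 - Q * Qᵀ) = U * Matrix.diagonal lam * Uᵀ)
    (X : Finset (Fin n)) (m : ℕ) (hX : X.card = m) (hpm : p ≤ m) :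
    (-1 : ℝ) ^ p * (saddleSub L V X).det =
      (Vᵀ * V).det *
        ∑ Y : {s : Finset (Fin q) // s.card = m - p},
          (concatSub Q U X Y.1 * (concatSub Q U X Y.1)ᵀ).det * ∏ i ∈ Y.1, lam i := by
  obtain ⟨T, rfl⟩ := hspan
  have hVV : det ((Q * T)ᵀ * (Q * T)) = det T ^ 2 := by
    rw [transpose_mul, Matrix.mul_assoc, ← Matrix.mul_assoc Qᵀ, hQQ, Matrix.one_mul, det_mul,
      det_transpose, sq]
  have hsum := det_fromBlocks_mul_diagonal_mul_transpose
    (Q.submatrix (Subtype.val : X → Fin n) id) (U.submatrix Subtype.val id) lam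
  rw [Fintype.card_fin, Fintype.card_coe, hX] at hsum
  calc (-1 : ℝ) ^ p * det (saddleSub L (Q * T) X)
      = det T ^ 2 * ((-1) ^ p * det (fromBlocks
          ((U * diagonal lam * Uᵀ).submatrix (Subtype.val : X → Fin n) Subtype.val)
          (Q.submatrix Subtype.val id)
          (Q.submatrix Subtype.val id)ᵀ 0)) := by
        rw [← hdecomp, det_fromBlocks_submatrix_one_sub_mul_mul_one_sub, mul_left_comm,
          ← det_fromBlocks_mul_transpose_zero]
        rfl
    _ = _ := by
      rw [hVV, ← sum_subtype {Y | p + #Y = m} (fun Y => by rw [mem_filter_univ]; omega)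
        fun Y => det (concatSub Q U X Y * (concatSub Q U X Y)ᵀ) * ∏ i ∈ Y, lam i]
      exact congrArg _ hsum

/-- Generalized Cauchy–Binet formula for saddle-point matrices. Here
`det (B * Bᵀ)` expresses `det ([Q_{X,:}  Ũ_{X,Y}])²` (the factor is square since
`|X| = m = p + (m-p)`). -/
theorem generalized_cauchy_binet {n p q : ℕ}
    (L : Matrix (Fin n) (Fin n) ℝ) (hL : Lᵀ = L)
    (V : Matrix (Fin n) (Fin p) ℝ) (hV : V.rank = p)
    (hCPSD : ∀ x : Fin n → ℝ, Vᵀ.mulVec x = 0 → 0 ≤ x ⬝ᵥ L.mulVec x)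
    (Q : Matrix (Fin n) (Fin p) ℝ) (hQQ : Qᵀ * Q = 1)
    (hspan : ∃ R : Matrix (Fin p) (Fin p) ℝ, V = Q * R)
    (U : Matrix (Fin n) (Fin q) ℝ) (hUU : Uᵀ * U = 1)
    (lam : Fin q → ℝ) (hlam : ∀ i, lam i ≠ 0)
    (hdecomp : (1 - Q * Qᵀ) * L * (1 - Q * Qᵀ) = U * Matrix.diagonal lam * Uᵀ)
    (hq : ((1 - Q * Qᵀ) * L * (1 - Q * Qᵀ)).rank = q)
    (X : Finset (Fin n)) (m : ℕ) (hX : X.card = m) (hpm : p ≤ m) (hm : m ≤ p + q) :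
    (-1 : ℝ) ^ p * (saddleSub L V X).det =
      (Vᵀ * V).det *
        ∑ Y : {s : Finset (Fin q) // s.card = m - p},
          (concatSub Q U X Y.1 * (concatSub Q U X Y.1)ᵀ).det * ∏ i ∈ Y.1, lam i :=
  generalized_cauchy_binet_general L V Q hQQ hspan U lam hdecomp X m hX hpm
end

section
/- Let (L,V) be a nonnegative pair with L̃ = (I−QQᵀ)L(I−QQᵀ) as above, where Q is an orthonormal basis of span(V ∈ ℝ^{n×p}). Then for any m with p ≤ m ≤ n: (−1)^p · Σ_{X⊆{1,...,n}, |X|=m} det([[L_X, V_{X,:}],[(V_{X,:})ᵀ, 0]]) = e_{m−p}(L̃) · det(VᵀV), where e_k(L̃) denotes the k-th elementary symmetric polynomial of the eigenvalues of L̃. -/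
open Matrix

/-- `e k M`: the `k`-th elementary symmetric polynomial of the eigenvalues of `M`,
expressed as the sum of all `k × k` principal minors of `M`. -/
noncomputable def esp {n : ℕ} (k : ℕ) (M : Matrix (Fin n) (Fin n) ℝ) : ℝ :=
  ∑ S : {s : Finset (Fin n) // s.card = k},
    (M.submatrix (fun i : ↥S.1 => i.1) (fun i : ↥S.1 => i.1)).det

/-! Both sides are coefficients of polynomials in `t`. Expanding by multilinearity in the rows of
the first block, `det [[1 + tL, tV], [Vᵀ, 0]] = ∑_X t^|X| det (saddleSub L V X)`, while
`det (1 + t L̃) = ∑_k t^k e_k(L̃)`. Writing `V = Q R` and `P = 1 - QQᵀ`, a column operation and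
multiplication by the involution `[[P, Q], [Qᵀ, 0]]` (of determinant `(-1)^p`) give
`(-1)^p det [[1 + tL, tV], [Vᵀ, 0]] = t^p det (VᵀV) det (1 + t L̃)`, the factor `t^p` coming from
`det (P + t QQᵀ)`. Comparing the coefficients of `t^m` proves the claim. -/

open Finset Polynomial

def Finset.disjSumUnivEquiv {m k : Type*} [Fintype k] (X : Finset m) :
    ↥(X.disjSum (univ : Finset k)) ≃ ↥X ⊕ k :=
  Equiv.subtypeSum.trans <| Equiv.sumCongr (Equiv.subtypeEquivRight fun _ => inl_mem_disjSum)
    (Equiv.subtypeUnivEquiv fun _ => by simp)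

namespace Matrix

theorem det_submatrix_disjSum_univ {m k R : Type*} [DecidableEq m] [Fintype k] [DecidableEq k]
    [CommRing R] (N : Matrix (m ⊕ k) (m ⊕ k) R) (X : Finset m) :
    det (N.submatrix ((↑) : ↥(X.disjSum (univ : Finset k)) → m ⊕ k) (↑)) =
      det (N.submatrix (Sum.map ((↑) : ↥X → m) id) (Sum.map (↑) id)) := by
  rw [← det_submatrix_equiv_self (disjSumUnivEquiv X).symm]
  congr 1
  ext (i | i) (j | j) <;> rfl

variable {m k R : Type*} [Fintype m] [DecidableEq m] [Fintype k] [DecidableEq k] [CommRing R]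

theorem det_piecewise_fromBlocks_one_zero (N : Matrix (m ⊕ k) (m ⊕ k) R) (X : Finset m)
    (Y : Finset k) :
    det (of ((X.disjSum Y).piecewise N.row (fromBlocks 1 0 0 0 : Matrix (m ⊕ k) (m ⊕ k) R).row)) =
      if Y = univ then det (N.submatrix (Sum.map ((↑) : ↥X → m) id) (Sum.map (↑) id)) else 0 := by
  split_ifs with hY
  · subst hY
    have hone : ∀ i ∉ X.disjSum univ, (fromBlocks 1 0 0 0 : Matrix (m ⊕ k) (m ⊕ k) R).row i =
        (1 : Matrix (m ⊕ k) (m ⊕ k) R).row i := by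
      rintro (a | b) hi
      · ext (j | j) <;> simp [row, one_apply]
      · simp at hi
    rw [(X.disjSum univ).piecewise_congr (fun _ _ => rfl) hone,
      det_piecewise_one_eq_submatrix_det, det_submatrix_disjSum_univ]
  · obtain ⟨b, hb⟩ : ∃ b, b ∉ Y := by simpa [eq_univ_iff_forall] using hY
    refine det_eq_zero_of_row_eq_zero (Sum.inr b) fun j => ?_
    rw [of_apply, piecewise_eq_of_notMem _ _ _ (by simpa using hb)]
    cases j <;> rfl

/-- Expanding by multilinearity in the rows `inl i = t • N (inl i) + eᵢ`, only the choices that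
take `N` on every row `inr j` survive. -/
theorem det_fromBlocks_one_add_smul (A : Matrix m m R) (B : Matrix m k R) (C : Matrix k m R)
    (D : Matrix k k R) (t : R) :
    det (fromBlocks (1 + t • A) (t • B) C D) =
      ∑ X : Finset m, t ^ #X *
        det ((fromBlocks A B C D).submatrix (Sum.map ((↑) : ↥X → m) id) (Sum.map (↑) id)) := by
  set N := fromBlocks A B C D
  set E : Matrix (m ⊕ k) (m ⊕ k) R := fromBlocks 1 0 0 0
  set d : m ⊕ k → R := Sum.elim (fun _ => t) (fun _ => 1)
  have hsplit : fromBlocks (1 + t • A) (t • B) C D = of ((fun i => d i • N.row i) + E.row) := by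
    ext (i | i) (j | j) <;> simp [d, E, N, add_comm]
  have hterm (X : Finset m) (Y : Finset k) :
      detRowAlternating ((X.disjSum Y).piecewise (fun i => d i • N.row i) E.row) =
        t ^ #X * det (of ((X.disjSum Y).piecewise N.row E.row)) := by
    have hsmul : (X.disjSum Y).piecewise (fun i => d i • N.row i) E.row =
        fun i => (if i ∈ X.disjSum Y then d i else 1) • (X.disjSum Y).piecewise N.row E.row i := by
      funext i
      by_cases hi : i ∈ X.disjSum Y
      · simp only [piecewise_eq_of_mem _ _ _ hi, if_pos hi]
      · simp only [piecewise_eq_of_notMem _ _ _ hi, if_neg hi, one_smul]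
    have hprod : ∏ i, (if i ∈ X.disjSum Y then d i else 1) = t ^ #X := by
      simp [d, prod_ite_mem]
    rw [hsmul]
    change detRowAlternating (fun i => (if i ∈ X.disjSum Y then d i else 1) • _) = _
    rw [AlternatingMap.map_smul_univ, hprod, smul_eq_mul]
    rfl
  rw [hsplit, det]
  change detRowAlternating ((fun i => d i • N.row i) + E.row) = _
  rw [AlternatingMap.map_add_univ, ← sumEquiv.symm.toEquiv.sum_comp]
  change ∑ p : Finset m × Finset k,
    detRowAlternating ((p.1.disjSum p.2).piecewise (fun i => d i • N.row i) E.row) = _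
  simp only [Fintype.sum_prod_type, hterm, E, det_piecewise_fromBlocks_one_zero, mul_ite, mul_zero,
    Fintype.sum_ite_eq']

theorem det_fromBlocks_mul_conj (A : Matrix m m R) (B : Matrix m k R) (C : Matrix k m R)
    (D S T : Matrix k k R) :
    det (fromBlocks A (B * T) (S * C) (S * D * T)) = det S * det T * det (fromBlocks A B C D) := by
  have h : fromBlocks A (B * T) (S * C) (S * D * T) =
      fromBlocks 1 0 0 S * fromBlocks A B C D * fromBlocks 1 0 0 T := by
    simp [fromBlocks_multiply, Matrix.mul_assoc]
  rw [h, det_mul, det_mul, det_fromBlocks_zero₂₁, det_fromBlocks_zero₂₁]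
  simp only [det_one, one_mul]
  ring

variable {Q : Matrix m k R}

theorem det_fromBlocks_one_sub_mul_transpose (hQ : Qᵀ * Q = 1) :
    det (fromBlocks (1 - Q * Qᵀ) Q Qᵀ 0) = (-1) ^ Fintype.card k := by
  have h : fromBlocks (1 - Q * Qᵀ) Q Qᵀ 0 = fromBlocks 1 (-Q) 0 1 * fromBlocks 1 Q Qᵀ 0 := by
    simp [fromBlocks_multiply, sub_eq_add_neg]
  rw [h, det_mul, det_fromBlocks_zero₂₁, det_fromBlocks_one₁₁, hQ]
  simp [det_neg]

theorem det_one_sub_mul_transpose_add_smul (hQ : Qᵀ * Q = 1) (t : R) :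
    det (1 - Q * Qᵀ + t • (Q * Qᵀ)) = t ^ Fintype.card k := by
  have h : 1 - Q * Qᵀ + t • (Q * Qᵀ) = 1 + ((t - 1) • Q) * Qᵀ := by
    rw [Matrix.smul_mul, sub_smul, one_smul]; abel
  rw [h, det_one_add_mul_comm, Matrix.mul_smul, hQ, smul_one_eq_diagonal, ← diagonal_one,
    diagonal_add, det_diagonal]
  simp

theorem neg_one_pow_mul_det_fromBlocks_one_add_smul (hQ : Qᵀ * Q = 1) (L : Matrix m m R) (t : R) :
    (-1) ^ Fintype.card k * det (fromBlocks (1 + t • L) (t • Q) Qᵀ 0) =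
      t ^ Fintype.card k * det (1 + t • ((1 - Q * Qᵀ) * L * (1 - Q * Qᵀ))) := by
  have hQ' (X : Matrix k m R) : Qᵀ * (Q * X) = X := by
    rw [← Matrix.mul_assoc, hQ, Matrix.one_mul]
  -- Clearing `t • Q * Qᵀ * L` by a column operation and then multiplying by the involution
  -- `[[1 - QQᵀ, Q], [Qᵀ, 0]]` makes the matrix block upper triangular.
  have hfac : fromBlocks (1 + t • L) (t • Q) Qᵀ 0 * fromBlocks 1 0 (-(Qᵀ * L)) 1 *
        fromBlocks (1 - Q * Qᵀ) Q Qᵀ 0 =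
      fromBlocks ((1 + t • ((1 - Q * Qᵀ) * L * (1 - Q * Qᵀ))) * (1 - Q * Qᵀ + t • (Q * Qᵀ)))
        (Q + t • ((1 - Q * Qᵀ) * L * Q)) 0 1 := by
    simp only [fromBlocks_multiply, Matrix.mul_add, Matrix.add_mul, Matrix.mul_sub,
      Matrix.sub_mul, Matrix.mul_smul, Matrix.smul_mul, Matrix.mul_assoc, Matrix.mul_one,
      Matrix.one_mul, Matrix.mul_zero, Matrix.zero_mul, Matrix.mul_neg, Matrix.neg_mul, hQ, hQ',
      smul_add, smul_sub, smul_smul]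
    congr 1 <;> abel
  have h := congrArg det hfac
  rw [det_mul, det_mul, det_fromBlocks_zero₁₂, det_fromBlocks_one_sub_mul_transpose hQ,
    det_fromBlocks_zero₂₁, det_mul, det_one_sub_mul_transpose_add_smul hQ] at h
  simp only [det_one, mul_one] at h
  rw [mul_comm, h, mul_comm]

theorem neg_one_pow_mul_det_fromBlocks_one_add_smul_of_eq_mul (hQ : Qᵀ * Q = 1)
    (L : Matrix m m R) {V : Matrix m k R} {S : Matrix k k R} (hV : V = Q * S) (t : R) :
    (-1) ^ Fintype.card k * det (fromBlocks (1 + t • L) (t • V) Vᵀ 0) =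
      t ^ Fintype.card k * det (Vᵀ * V) * det (1 + t • ((1 - Q * Qᵀ) * L * (1 - Q * Qᵀ))) := by
  have hVV : Vᵀ * V = Sᵀ * S := by
    rw [hV, transpose_mul, Matrix.mul_assoc, ← Matrix.mul_assoc Qᵀ, hQ, Matrix.one_mul]
  have h := det_fromBlocks_mul_conj (1 + t • L) (t • Q) Qᵀ 0 Sᵀ S
  rw [Matrix.mul_zero, Matrix.zero_mul, Matrix.smul_mul, ← hV, ← transpose_mul, ← hV] at h
  rw [h, hVV, det_mul, det_transpose, mul_right_comm _ (det S * det S),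
    ← neg_one_pow_mul_det_fromBlocks_one_add_smul hQ]
  ring

end Matrix

theorem Polynomial.coeff_sum_X_pow_card_mul_C {ι R : Type*} [Fintype ι] [CommSemiring R]
    (a : Finset ι → R) (j : ℕ) :
    (∑ s : Finset ι, X ^ #s * C (a s)).coeff j = ∑ s : {s : Finset ι // #s = j}, a s := by
  simp only [finsetSum_coeff, X_pow_mul, coeff_C_mul_X_pow]
  rw [← sum_filter]
  exact sum_subtype _ (by simp [eq_comm]) _

theorem esp_eq_coeff_det_one_add_X_smul {n : ℕ} (k : ℕ) (M : Matrix (Fin n) (Fin n) ℝ) :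
    esp k M = (det (1 + (X : ℝ[X]) • M.map C)).coeff k := by
  rw [coeff_det_one_add_X_smul_eq_sum_minors, esp]
  exact (sum_subtype _ (fun _ => mem_powersetCard_univ)
    fun s : Finset (Fin n) => (M.submatrix ((↑) : ↥s → Fin n) (↑)).det).symm

theorem det_fromBlocks_one_add_X_smul_map_C {n p : ℕ} (L : Matrix (Fin n) (Fin n) ℝ)
    (V : Matrix (Fin n) (Fin p) ℝ) :
    det (fromBlocks (1 + (X : ℝ[X]) • L.map C) ((X : ℝ[X]) • V.map C) (V.map C)ᵀ 0) =
      ∑ S : Finset (Fin n), X ^ #S * C (det (saddleSub L V S)) := by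
  rw [det_fromBlocks_one_add_smul]
  refine Fintype.sum_congr _ _ fun S => ?_
  rw [RingHom.map_det]
  congr 2
  ext (i | i) (j | j) <;> simp [saddleSub]

theorem saddle_normalisation_fixed_size_general {n p : ℕ}
    (L : Matrix (Fin n) (Fin n) ℝ)
    (V : Matrix (Fin n) (Fin p) ℝ)
    (Q : Matrix (Fin n) (Fin p) ℝ) (hQQ : Qᵀ * Q = 1)
    (hspan : ∃ R : Matrix (Fin p) (Fin p) ℝ, V = Q * R)
    (m : ℕ) (hpm : p ≤ m) :
    (-1 : ℝ) ^ p *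
        ∑ X : {s : Finset (Fin n) // s.card = m}, (saddleSub L V X.1).det =
      esp (m - p) ((1 - Q * Qᵀ) * L * (1 - Q * Qᵀ)) * (Vᵀ * V).det := by
  obtain ⟨R, hR⟩ := hspan
  have hQC : (Q.map C)ᵀ * Q.map C = (1 : Matrix (Fin p) (Fin p) ℝ[X]) := by
    rw [← transpose_map, ← Matrix.map_mul, hQQ, Matrix.map_one _ C.map_zero C.map_one]
  have hVC : V.map C = Q.map C * R.map C := by rw [hR, Matrix.map_mul]
  have hVVC : ((V.map C)ᵀ * V.map C).det = C (Vᵀ * V).det := by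
    rw [← transpose_map, ← Matrix.map_mul, RingHom.map_det]
    rfl
  have hLC : (1 - Q.map C * (Q.map C)ᵀ) * L.map C * (1 - Q.map C * (Q.map C)ᵀ) =
      ((1 - Q * Qᵀ) * L * (1 - Q * Qᵀ)).map (C : ℝ →+* ℝ[X]) := by
    simp [Matrix.map_mul, Matrix.map_sub, transpose_map]
  have hpoly := neg_one_pow_mul_det_fromBlocks_one_add_smul_of_eq_mul hQC (L.map C) hVC X
  rw [det_fromBlocks_one_add_X_smul_map_C, hVVC, hLC, Fintype.card_fin,
    show (-1 : ℝ[X]) ^ p = C ((-1) ^ p) by simp, mul_assoc] at hpoly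
  have hcoeff := congrArg (coeff · m) hpoly
  simp only [coeff_C_mul, coeff_sum_X_pow_card_mul_C, coeff_X_pow_mul', if_pos hpm,
    ← esp_eq_coeff_det_one_add_X_smul] at hcoeff
  rw [hcoeff, mul_comm]

/-- Normalisation constant of a fixed-size extended L-ensemble. -/
theorem saddle_normalisation_fixed_size {n p : ℕ}
    (L : Matrix (Fin n) (Fin n) ℝ) (hL : Lᵀ = L)
    (V : Matrix (Fin n) (Fin p) ℝ) (hV : V.rank = p)
    (hCPSD : ∀ x : Fin n → ℝ, Vᵀ.mulVec x = 0 → 0 ≤ x ⬝ᵥ L.mulVec x)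
    (Q : Matrix (Fin n) (Fin p) ℝ) (hQQ : Qᵀ * Q = 1)
    (hspan : ∃ R : Matrix (Fin p) (Fin p) ℝ, V = Q * R)
    (m : ℕ) (hpm : p ≤ m) (hmn : m ≤ n) :
    (-1 : ℝ) ^ p *
        ∑ X : {s : Finset (Fin n) // s.card = m}, (saddleSub L V X.1).det =
      esp (m - p) ((1 - Q * Qᵀ) * L * (1 - Q * Qᵀ)) * (Vᵀ * V).det :=
  saddle_normalisation_fixed_size_general L V Q hQQ hspan m hpm
end
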